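/- arXiv:2201.02346 — 2 statements merged into one kernel-verified Lean document; each statement's English description precedes it below -/
import Mathlib

section
/- Let S be a semigroup with only finitely many nontrivial left ideals. Then the intersection ideal graph Γ(S) is a regular graph if and only if Γ(S) is either a null graph or a complete graph. -/
/-- `I` is a left ideal of the semigroup `S`: a nonempty subset closed under
left multiplication by arbitrary elements of `S`. -/
def IsLeftIdeal (S : Type*) [Semigroup S] (I : Set S) : Prop :=
  I.Nonempty ∧ ∀ s : S, ∀ x ∈ I, s * x ∈ I

/-- `I` is a nontrivial left ideal of `S`: a left ideal with `I ≠ S`. -/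
def IsNontrivialLeftIdeal (S : Type*) [Semigroup S] (I : Set S) : Prop :=
  IsLeftIdeal S I ∧ I ≠ Set.univ

/-- `I` is a minimal left ideal of `S`: a nontrivial left ideal properly
containing no left ideal of `S`. -/
def IsMinimalLeftIdeal (S : Type*) [Semigroup S] (I : Set S) : Prop :=
  IsNontrivialLeftIdeal S I ∧ ∀ J : Set S, IsLeftIdeal S J → ¬ J ⊂ I

/-- `I` is a maximal left ideal of `S`: a nontrivial left ideal not properly
contained in any nontrivial left ideal of `S`. -/
def IsMaximalLeftIdeal (S : Type*) [Semigroup S] (I : Set S) : Prop :=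
  IsNontrivialLeftIdeal S I ∧ ∀ J : Set S, IsNontrivialLeftIdeal S J → ¬ I ⊂ J

/-- The intersection ideal graph `Γ(S)`: vertices are the nontrivial left ideals of `S`,
two distinct vertices being adjacent iff their intersection is nonempty. -/
def idealGraph (S : Type*) [Semigroup S] :
    SimpleGraph {I : Set S // IsNontrivialLeftIdeal S I} where
  Adj I J := I ≠ J ∧ (I.1 ∩ J.1).Nonempty
  symm := by
    constructor
    rintro I J ⟨h1, h2⟩
    exact ⟨h1.symm, by rwa [Set.inter_comm]⟩
  loopless := by constructor; rintro I ⟨h1, -⟩; exact h1 rfl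

/-!
If vertices `I ⊆ J` of `Γ(S)` are such that some vertex meets `J` but not `I`, then `J` has
larger degree than `I`. Hence in a regular `Γ(S)` two disjoint vertices `A`, `B` cover `S`
(otherwise compare `A ⊆ A ∪ B`). Then no vertex `K` meets `A`: if `K` meets `B`, compare
`A ∩ K ⊆ K`; if not, `K ⊆ A` and `K ∪ B = S` force `K = A`. So a regular `Γ(S)` that is not
complete has an isolated vertex, hence is null.
-/

open Set

section

variable {S : Type*} [Semigroup S]

local notation "𝒱" => {I : Set S // IsNontrivialLeftIdeal S I}

theorem IsLeftIdeal.union {I J : Set S} (hI : IsLeftIdeal S I) (hJ : IsLeftIdeal S J) :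
    IsLeftIdeal S (I ∪ J) :=
  ⟨hI.1.inl, fun s _ hx => hx.imp (hI.2 s _) (hJ.2 s _)⟩

theorem IsNontrivialLeftIdeal.inter {I J : Set S} (hI : IsNontrivialLeftIdeal S I)
    (hJ : IsLeftIdeal S J) (hIJ : (I ∩ J).Nonempty) : IsNontrivialLeftIdeal S (I ∩ J) :=
  ⟨⟨hIJ, fun s _ hx => ⟨hI.1.2 s _ hx.1, hJ.2 s _ hx.2⟩⟩,
    fun h => hI.2 (eq_univ_of_univ_subset (h ▸ inter_subset_left))⟩

namespace idealGraph

theorem ncard_neighborSet_lt_of_subset [Finite 𝒱] {I J Y : 𝒱} (hIJ : I.1 ⊆ J.1)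
    (hIY : Disjoint I.1 Y.1) (hJY : (J.1 ∩ Y.1).Nonempty) :
    ((idealGraph S).neighborSet I).ncard < ((idealGraph S).neighborSet J).ncard := by
  obtain ⟨x, hx⟩ : I.1.Nonempty := I.2.1.1
  have hIJne : I ≠ J := by
    rintro rfl
    exact hJY.ne_empty hIY.inter_eq
  have hJ : J ∈ (idealGraph S).neighborSet I := ⟨hIJne, x, hx, hIJ hx⟩
  have hI_not : I ∉ (idealGraph S).neighborSet I := fun h => h.1 rfl
  have hY_not : Y ∉ insert I ((idealGraph S).neighborSet I \ {J}) := by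
    rintro (rfl | ⟨h, -⟩)
    · exact disjoint_left.1 hIY hx hx
    · exact h.2.ne_empty hIY.inter_eq
  have hYJ : Y ≠ J := by
    rintro rfl
    exact disjoint_left.1 hIY hx (hIJ hx)
  -- exchanging `J` for `I` turns `N(I)` into a set of the same size inside `N(J)`, missing `Y`
  rw [← ncard_exchange hI_not hJ]
  refine ncard_lt_ncard (ssubset_of_subset_not_subset ?_ fun h => hY_not (h ⟨hYJ.symm, hJY⟩))
  rintro K (rfl | ⟨hK, hKJ⟩)
  · exact ⟨hIJne.symm, x, hIJ hx, hx⟩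
  · exact ⟨Ne.symm hKJ, hK.2.mono (inter_subset_inter_left _ hIJ)⟩

theorem union_eq_univ_of_disjoint [Finite 𝒱] {d : ℕ}
    (hreg : ∀ v, ((idealGraph S).neighborSet v).ncard = d) {A B : 𝒱} (hAB : Disjoint A.1 B.1) :
    A.1 ∪ B.1 = univ := by
  by_contra hU
  let C : 𝒱 := ⟨A.1 ∪ B.1, A.2.1.union B.2.1, hU⟩
  have hlt := ncard_neighborSet_lt_of_subset (J := C) subset_union_left hAB
    (B.2.1.1.mono fun _ hb => ⟨Or.inr hb, hb⟩)
  rw [hreg, hreg] at hlt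
  exact hlt.false

theorem disjoint_of_not_adj {A B : 𝒱} (hAB : A ≠ B) (h : ¬ (idealGraph S).Adj A B) :
    Disjoint A.1 B.1 :=
  disjoint_iff_inter_eq_empty.2 (not_nonempty_iff_eq_empty.1 fun hmeet => h ⟨hAB, hmeet⟩)

theorem not_adj_of_disjoint [Finite 𝒱] {d : ℕ}
    (hreg : ∀ v, ((idealGraph S).neighborSet v).ncard = d) {A B : 𝒱} (hAB : Disjoint A.1 B.1)
    (K : 𝒱) : ¬ (idealGraph S).Adj A K := by
  rintro ⟨hne, hmeet⟩
  obtain hKB | hKB := (K.1 ∩ B.1).eq_empty_or_nonempty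
  · replace hKB : Disjoint K.1 B.1 := disjoint_iff_inter_eq_empty.2 hKB
    have hKA : K.1 ⊆ A.1 := Disjoint.left_le_of_le_sup_right
      ((subset_univ _).trans (union_eq_univ_of_disjoint hreg hAB).ge) hKB
    have hAK : A.1 ⊆ K.1 := Disjoint.left_le_of_le_sup_right
      ((subset_univ _).trans (union_eq_univ_of_disjoint hreg hKB).ge) hAB
    exact hne (Subtype.ext (hAK.antisymm hKA))
  · let AK : 𝒱 := ⟨A.1 ∩ K.1, A.2.inter K.2.1 hmeet⟩
    have hlt := ncard_neighborSet_lt_of_subset (I := AK) inter_subset_right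
      (hAB.mono_left inter_subset_left) hKB
    rw [hreg, hreg] at hlt
    exact hlt.false

end idealGraph

end

/-- For a semigroup with finitely many nontrivial left ideals, `Γ(S)` is regular iff
it is null or complete. -/
theorem idealGraph_regular_iff_null_or_complete (S : Type*) [Semigroup S]
    (hfin : {I : Set S | IsNontrivialLeftIdeal S I}.Finite) :
    (∃ d : ℕ, ∀ v : {I : Set S // IsNontrivialLeftIdeal S I},
        ((idealGraph S).neighborSet v).ncard = d) ↔
      ((∀ u v : {I : Set S // IsNontrivialLeftIdeal S I}, ¬ (idealGraph S).Adj u v) ∨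
        (∀ u v : {I : Set S // IsNontrivialLeftIdeal S I}, u ≠ v → (idealGraph S).Adj u v)) := by
  have : Finite {I : Set S // IsNontrivialLeftIdeal S I} := hfin.to_subtype
  constructor
  · rintro ⟨d, hreg⟩
    refine or_iff_not_imp_right.2 fun hnc => ?_
    push Not at hnc
    obtain ⟨A, B, hAB, hnadj⟩ := hnc
    have hA : (idealGraph S).neighborSet A = ∅ := eq_empty_of_forall_notMem
      (idealGraph.not_adj_of_disjoint hreg (idealGraph.disjoint_of_not_adj hAB hnadj))
    intro u v huv
    have hu : (idealGraph S).neighborSet u = ∅ := by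
      rw [← ncard_eq_zero, hreg, ← hreg A, hA, ncard_empty]
    exact hu.subset huv
  · rintro (hnull | hcomplete)
    · refine ⟨0, fun v => ?_⟩
      rw [ncard_eq_zero]
      exact eq_empty_of_forall_notMem (hnull v)
    · refine ⟨Nat.card {I : Set S // IsNontrivialLeftIdeal S I} - 1, fun v => ?_⟩
      have hv : (idealGraph S).neighborSet v = {v}ᶜ :=
        ext fun u => ⟨fun h => h.1.symm, fun h => hcomplete v u (Ne.symm h)⟩
      rw [hv, ncard_compl, ncard_singleton]
end

section
/- Let S be a semigroup with exactly n minimal left ideals, where 1 ≤ n < ∞. Then the independence number of the intersection ideal graph Γ(S) equals n. -/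
/-- The independence number of `Γ(S)`: the supremum of cardinalities of independent
sets of vertices. -/
noncomputable def indepNumber (S : Type*) [Semigroup S] : ℕ∞ :=
  sSup {k : ℕ∞ | ∃ A : Set {I : Set S // IsNontrivialLeftIdeal S I},
    (∀ u ∈ A, ∀ v ∈ A, ¬ (idealGraph S).Adj u v) ∧ A.encard = k}

/-!
Distinct minimal left ideals are disjoint, so the minimal left ideals form an independent set
of size `n` in `Γ(S)`. Conversely, if `M` is a minimal left ideal and `x ∈ I`, then `M x` is a
minimal left ideal contained in `I`. Choosing such a minimal left ideal inside every vertex of an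
independent set is injective, because distinct vertices of an independent set are disjoint.
-/

section

variable {S : Type*} [Semigroup S]

namespace IsLeftIdeal

lemma inter {I J : Set S} (hI : IsLeftIdeal S I) (hJ : IsLeftIdeal S J)
    (h : (I ∩ J).Nonempty) : IsLeftIdeal S (I ∩ J) :=
  ⟨h, fun s x hx => ⟨hI.2 s x hx.1, hJ.2 s x hx.2⟩⟩

lemma image_mul_right {M : Set S} (hM : IsLeftIdeal S M) (x : S) :
    IsLeftIdeal S ((· * x) '' M) := by
  refine ⟨hM.1.image _, ?_⟩
  rintro s _ ⟨m, hm, rfl⟩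
  exact ⟨s * m, hM.2 s m hm, mul_assoc s m x⟩

lemma inter_preimage_mul_right {M J : Set S} (hM : IsLeftIdeal S M) (hJ : IsLeftIdeal S J)
    (x : S) (h : (M ∩ (· * x) ⁻¹' J).Nonempty) : IsLeftIdeal S (M ∩ (· * x) ⁻¹' J) := by
  refine ⟨h, fun s m hm => ⟨hM.2 s m hm.1, ?_⟩⟩
  change s * m * x ∈ J
  rw [mul_assoc]
  exact hJ.2 s _ hm.2

end IsLeftIdeal

namespace IsMinimalLeftIdeal

lemma eq_of_subset {I J : Set S} (hI : IsMinimalLeftIdeal S I) (hJ : IsLeftIdeal S J)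
    (hJI : J ⊆ I) : J = I := by
  by_contra h
  exact hI.2 J hJ (hJI.ssubset_of_ne h)

lemma eq_of_inter_nonempty {I J : Set S} (hI : IsMinimalLeftIdeal S I)
    (hJ : IsMinimalLeftIdeal S J) (h : (I ∩ J).Nonempty) : I = J := by
  have hIJ := hI.1.1.inter hJ.1.1 h
  exact (hI.eq_of_subset hIJ Set.inter_subset_left).symm.trans
    (hJ.eq_of_subset hIJ Set.inter_subset_right)

lemma image_mul_right {M : Set S} (hM : IsMinimalLeftIdeal S M) (x : S)
    (hne : (· * x) '' M ≠ Set.univ) : IsMinimalLeftIdeal S ((· * x) '' M) := by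
  refine ⟨⟨hM.1.1.image_mul_right x, hne⟩, fun J hJ hJM => hJM.2 ?_⟩
  obtain ⟨_, hmJ⟩ := hJ.1
  obtain ⟨m, hm, rfl⟩ := hJM.1 hmJ
  have hMJ : M ∩ (· * x) ⁻¹' J = M :=
    hM.eq_of_subset (hM.1.1.inter_preimage_mul_right hJ x ⟨m, hm, hmJ⟩) Set.inter_subset_left
  rintro _ ⟨m', hm', rfl⟩
  exact Set.inter_eq_left.mp hMJ hm'

lemma exists_subset {M I : Set S} (hM : IsMinimalLeftIdeal S M)
    (hI : IsNontrivialLeftIdeal S I) : ∃ N, IsMinimalLeftIdeal S N ∧ N ⊆ I := by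
  obtain ⟨x, hx⟩ := hI.1.1
  have hMxI : (· * x) '' M ⊆ I := by
    rintro _ ⟨m, -, rfl⟩
    exact hI.1.2 m x hx
  exact ⟨_, hM.image_mul_right x fun h => hI.2 (Set.eq_univ_of_univ_subset (h ▸ hMxI)), hMxI⟩

end IsMinimalLeftIdeal

lemma encard_independent_le_of_isMinimalLeftIdeal {M : Set S} (hM : IsMinimalLeftIdeal S M)
    {A : Set {I : Set S // IsNontrivialLeftIdeal S I}}
    (hA : ∀ u ∈ A, ∀ v ∈ A, ¬ (idealGraph S).Adj u v) :
    A.encard ≤ {I : Set S | IsMinimalLeftIdeal S I}.encard := by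
  choose f hf hfv using fun v : {I : Set S // IsNontrivialLeftIdeal S I} => hM.exists_subset v.2
  refine Set.encard_le_encard_of_injOn (fun v _ => hf v) fun u hu v hv huv => ?_
  by_contra hne
  obtain ⟨x, hx⟩ := (hf u).1.1.1
  exact hA u hu v hv ⟨hne, x, hfv u hx, hfv v (huv ▸ hx)⟩

lemma not_adj_of_isMinimalLeftIdeal {u v : {I : Set S // IsNontrivialLeftIdeal S I}}
    (hu : IsMinimalLeftIdeal S u.1) (hv : IsMinimalLeftIdeal S v.1) :
    ¬ (idealGraph S).Adj u v :=
  fun ⟨hne, huv⟩ => hne (Subtype.ext (hu.eq_of_inter_nonempty hv huv))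

lemma encard_minimalLeftIdeal_vertices :
    {v : {I : Set S // IsNontrivialLeftIdeal S I} | IsMinimalLeftIdeal S v.1}.encard =
      {I : Set S | IsMinimalLeftIdeal S I}.encard := by
  rw [← Subtype.val_injective.encard_image]
  congr 1
  ext I
  exact ⟨fun ⟨v, hv, hvI⟩ => hvI ▸ hv, fun hI => ⟨⟨I, hI.1⟩, hI, rfl⟩⟩

end

/-- If `S` has exactly `n` minimal left ideals (`1 ≤ n < ∞`), then the independence
number of `Γ(S)` equals `n`. -/
theorem indepNumber_eq (S : Type*) [Semigroup S] (n : ℕ) (hn : 1 ≤ n)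
    (hcard : {I : Set S | IsMinimalLeftIdeal S I}.encard = n) :
    indepNumber S = n := by
  obtain ⟨M, hM⟩ : {I : Set S | IsMinimalLeftIdeal S I}.Nonempty := by
    rw [← Set.encard_ne_zero, hcard]
    exact_mod_cast Nat.one_le_iff_ne_zero.mp hn
  rw [← hcard]
  refine le_antisymm (sSup_le ?_) (le_sSup ⟨_, ?_, encard_minimalLeftIdeal_vertices⟩)
  · rintro k ⟨A, hA, rfl⟩
    exact encard_independent_le_of_isMinimalLeftIdeal hM hA
  · exact fun u hu v hv => not_adj_of_isMinimalLeftIdeal hu hv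
end
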